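/- Let m ∈ ℕ, r_i ≥ 1 for 1 ≤ i ≤ m, and 1/r = Σ_{i=1}^m 1/r_i. Let φ_i(t) = e^{t^{r_i}} − 1 and Φ(t) = t(1+log⁺t)^{1/r}. Then there is a constant C such that (∏_{i=1}^m φ_i^{-1}(t))·Φ^{-1}(t) ≤ C·t for all t ≥ e, where φ_i^{-1} and Φ^{-1} are the generalized inverses. -/
import Mathlib


/-- Generalized inverse: `φ⁻¹(t) = inf {s ≥ 0 : φ(s) ≥ t}`. -/
noncomputable def ginv (φ : ℝ → ℝ) (t : ℝ) : ℝ :=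
  sInf {s : ℝ | 0 ≤ s ∧ t ≤ φ s}

lemma ginv_le' {φ : ℝ → ℝ} {t s : ℝ} (hs : 0 ≤ s) (h : t ≤ φ s) : ginv φ t ≤ s :=
  csInf_le ⟨0, fun _ hx => hx.1⟩ ⟨hs, h⟩

lemma ginv_nonneg' {φ : ℝ → ℝ} {t s : ℝ} (hs : 0 ≤ s) (h : t ≤ φ s) : 0 ≤ ginv φ t :=
  le_csInf ⟨s, hs, h⟩ fun _ hx => hx.1

/-- Let `r i ≥ 1`, `1/r = Σᵢ 1/rᵢ`, `φᵢ(t) = e^{t^{rᵢ}} − 1` and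
`Φ(t) = t(1+log⁺t)^{1/r}`. Then `(∏ᵢ φᵢ⁻¹(t)) · Φ⁻¹(t) ≤ C t` for all `t ≥ e`. -/
theorem prod_ginv_mul_ginv_le (m : ℕ) (rr : Fin m → ℝ) (hrr : ∀ i, 1 ≤ rr i)
    (r : ℝ) (hr : 1 / r = ∑ i, 1 / rr i) :
    ∃ C > 0, ∀ t ≥ Real.exp 1,
      (∏ i, ginv (fun u => Real.exp (u ^ rr i) - 1) t) *
          ginv (fun u => u * (1 + max (Real.log u) 0) ^ (1 / r)) t ≤ C * t := by
  rw [hr]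
  set ρ : ℝ := ∑ i, 1 / rr i with hρdef
  have hρ : 0 ≤ ρ := Finset.sum_nonneg fun i _ =>
    one_div_nonneg.2 (by linarith [hrr i])
  set L₀ : ℝ := max 2 (16 * ρ ^ 2) with hL₀def
  have hL₀2 : (2 : ℝ) ≤ L₀ := le_max_left _ _
  have hL₀pos : (0 : ℝ) < L₀ := by linarith
  set K : ℝ := L₀ ^ ρ with hKdef
  have hKpos : 0 < K := Real.rpow_pos_of_pos hL₀pos ρ
  refine ⟨K, hKpos, fun t ht => ?_⟩
  have ht0 : 0 < t := lt_of_lt_of_le (Real.exp_pos 1) ht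
  have hlogt : 1 ≤ Real.log t := by
    have := Real.log_le_log (Real.exp_pos 1) ht
    rwa [Real.log_exp] at this
  set L : ℝ := 1 + Real.log t with hLdef
  have hL2 : 2 ≤ L := by rw [hLdef]; linarith
  have hL0 : (0 : ℝ) < L := by linarith
  have hLρpos : 0 < L ^ ρ := Real.rpow_pos_of_pos hL0 ρ
  have hmem : ∀ i, t ≤ Real.exp ((L ^ (1 / rr i)) ^ rr i) - 1 := by
    intro i
    have hri : (0 : ℝ) < rr i := lt_of_lt_of_le one_pos (hrr i)
    have h1 : (L ^ (1 / rr i)) ^ rr i = L := by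
      rw [← Real.rpow_mul hL0.le, one_div_mul_cancel hri.ne', Real.rpow_one]
    rw [h1, hLdef, Real.exp_add, Real.exp_log ht0]
    nlinarith [Real.add_one_le_exp 1, Real.exp_pos 1, ht]
  have hbound : ∀ i, ginv (fun u => Real.exp (u ^ rr i) - 1) t ≤ L ^ (1 / rr i) :=
    fun i => ginv_le' (Real.rpow_nonneg hL0.le _) (hmem i)
  have hbnn : ∀ i, 0 ≤ ginv (fun u => Real.exp (u ^ rr i) - 1) t :=
    fun i => ginv_nonneg' (Real.rpow_nonneg hL0.le _) (hmem i)
  have hP : (∏ i, ginv (fun u => Real.exp (u ^ rr i) - 1) t) ≤ L ^ ρ := by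
    calc (∏ i, ginv (fun u => Real.exp (u ^ rr i) - 1) t)
        ≤ ∏ i, L ^ (1 / rr i) :=
          Finset.prod_le_prod (fun i _ => hbnn i) (fun i _ => hbound i)
      _ = L ^ ρ := by
          rw [hρdef, Real.rpow_def_of_pos hL0, Finset.mul_sum, Real.exp_sum]
          exact Finset.prod_congr rfl fun i _ => (Real.rpow_def_of_pos hL0 _)
  have hP0 : 0 ≤ ∏ i, ginv (fun u => Real.exp (u ^ rr i) - 1) t :=
    Finset.prod_nonneg fun i _ => hbnn i
  set s : ℝ := K * t / L ^ ρ with hsdef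
  have hs0 : 0 < s := by positivity
  have hΦs : t ≤ s * (1 + max (Real.log s) 0) ^ ρ := by
    rcases le_or_gt L L₀ with hc | hc
    · have hts : t ≤ s := by
        rw [hsdef, le_div_iff₀ hLρpos]
        calc t * L ^ ρ ≤ t * K :=
              mul_le_mul_of_nonneg_left (Real.rpow_le_rpow hL0.le hc hρ) ht0.le
          _ = K * t := mul_comm _ _
      have hbase : 1 ≤ (1 + max (Real.log s) 0) ^ ρ := by
        have h := Real.rpow_le_rpow zero_le_one
          (le_add_of_nonneg_right (le_max_right (Real.log s) 0)) hρ
        rwa [Real.one_rpow] at h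
      calc t ≤ s := hts
        _ = s * 1 := (mul_one s).symm
        _ ≤ s * (1 + max (Real.log s) 0) ^ ρ :=
            mul_le_mul_of_nonneg_left hbase hs0.le
    · have hlogs : Real.log s = ρ * Real.log L₀ + Real.log t - ρ * Real.log L := by
        rw [hsdef, Real.log_div (by positivity) hLρpos.ne',
          Real.log_mul hKpos.ne' ht0.ne', hKdef, Real.log_rpow hL₀pos,
          Real.log_rpow hL0]
      have hsq : Real.log L ≤ 2 * Real.sqrt L := by
        have h1 : Real.log (Real.sqrt L) ≤ Real.sqrt L - 1 :=
          Real.log_le_sub_one_of_pos (Real.sqrt_pos.2 hL0)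
        rw [Real.log_sqrt hL0.le] at h1
        linarith
      have h16 : 16 * ρ ^ 2 < L := lt_of_le_of_lt (le_max_right _ _) hc
      have hρL : ρ * Real.log L ≤ L / 2 := by
        have ha : Real.sqrt L ^ 2 = L := Real.sq_sqrt hL0.le
        have h4ρ : 4 * ρ ≤ Real.sqrt L := by
          have h := Real.sqrt_le_sqrt h16.le
          rwa [show (16 : ℝ) * ρ ^ 2 = (4 * ρ) ^ 2 by ring,
            Real.sqrt_sq (by positivity)] at h
        nlinarith [mul_le_mul_of_nonneg_left hsq hρ,
          mul_le_mul_of_nonneg_right h4ρ (Real.sqrt_nonneg L), Real.sqrt_nonneg L]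
      have hlogL0 : 0 ≤ Real.log L₀ := Real.log_nonneg (by linarith)
      have hlt : Real.log t = L - 1 := by rw [hLdef]; ring
      have hsL : L / 2 ≤ 1 + max (Real.log s) 0 := by
        have h1 : L / 2 - 1 ≤ Real.log s := by
          rw [hlogs, hlt]
          nlinarith [mul_nonneg hρ hlogL0]
        have := le_max_left (Real.log s) (0 : ℝ)
        linarith
      have hb0 : (0 : ℝ) ≤ L / 2 := by linarith
      have hpow : (L / 2) ^ ρ ≤ (1 + max (Real.log s) 0) ^ ρ :=
        Real.rpow_le_rpow hb0 hsL hρ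
      have h2ρpos : (0 : ℝ) < 2 ^ ρ := Real.rpow_pos_of_pos two_pos ρ
      have hs2 : t ≤ s * (L / 2) ^ ρ := by
        have hdiv : (L / 2) ^ ρ = L ^ ρ / 2 ^ ρ := Real.div_rpow hL0.le (by norm_num : (0:ℝ) ≤ 2) ρ
        have heq : K * t / L ^ ρ * (L ^ ρ / 2 ^ ρ) = K * t / 2 ^ ρ := by
          field_simp
        rw [hsdef, hdiv, heq, le_div_iff₀ h2ρpos]
        have h2K : (2 : ℝ) ^ ρ ≤ K := Real.rpow_le_rpow (by norm_num) hL₀2 hρ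
        calc t * 2 ^ ρ ≤ t * K := mul_le_mul_of_nonneg_left h2K ht0.le
          _ = K * t := mul_comm _ _
      calc t ≤ s * (L / 2) ^ ρ := hs2
        _ ≤ s * (1 + max (Real.log s) 0) ^ ρ :=
            mul_le_mul_of_nonneg_left hpow hs0.le
  have hQ : ginv (fun u => u * (1 + max (Real.log u) 0) ^ ρ) t ≤ s :=
    ginv_le' hs0.le hΦs
  have hQ0 : 0 ≤ ginv (fun u => u * (1 + max (Real.log u) 0) ^ ρ) t :=
    ginv_nonneg' hs0.le hΦs
  calc (∏ i, ginv (fun u => Real.exp (u ^ rr i) - 1) t) *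
        ginv (fun u => u * (1 + max (Real.log u) 0) ^ ρ) t
      ≤ L ^ ρ * s := mul_le_mul hP hQ hQ0 (Real.rpow_nonneg hL0.le ρ)
    _ = K * t := by
        rw [hsdef, mul_comm (L ^ ρ), div_mul_cancel₀ _ hLρpos.ne']
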